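/- Let q = ω/(1+ω) with ω > 0, let a = 1.01·ω(1+ω)/λ where λ = ω(1+ω)^b, and let (ζ_i) be the {0,1} Markov chain with ζ_0 = 0, P(0→1) = q, P(0→0) = 1−q, P(1→0) = 1. With N_h = #{1 ≤ i ≤ h : ζ_i = 0}, there exists a constant C = C(ω, b) such that E[a^{N_h}] ≤ C · r^h where r = (pa/2)(1 + sqrt(1 + 4q/(a p²))) with p = 1−q, and moreover r ≤ 1.01·ω/λ^{1/2} · (1+o_b(1)); in particular E[a^{N_h}] = O((1.02·ω/√λ)^h) for b sufficiently large. -/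

import Mathlib

open Finset

/-- One-step transition probability of the `{0,1}` chain (`true` = state `1`). -/
def chainStep (p q : ℝ) (prev next : Bool) : ℝ :=
  if prev then (if next then 0 else 1) else (if next then q else p)

/-- Probability of the trajectory `g 0, …, g h` of the chain started at `0`. -/
def trajProb (p q : ℝ) (h : ℕ) (g : Fin (h + 1) → Bool) : ℝ :=
  (if g 0 = false then 1 else 0) * ∏ i : Fin h, chainStep p q (g i.castSucc) (g i.succ)

/-- `E[a^{N_h}]` where `N_h = #{1 ≤ i ≤ h : ζ_i = 0}`. -/
noncomputable def chainGenFun (p q a : ℝ) (h : ℕ) : ℝ :=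
  ∑ g : Fin (h + 1) → Bool,
    trajProb p q h g * a ^ (univ.filter (fun i : Fin h => g i.succ = false)).card

/-- `q = ω/(1+ω)`. -/
noncomputable def qv (ω : ℝ) : ℝ := ω / (1 + ω)

/-- `λ = ω(1+ω)^b`. -/
noncomputable def lamv (b : ℕ) (ω : ℝ) : ℝ := ω * (1 + ω) ^ b

/-- `a = 1.01·ω(1+ω)/λ`. -/
noncomputable def av (b : ℕ) (ω : ℝ) : ℝ := 1.01 * ω * (1 + ω) / lamv b ω

/-- `r = (pa/2)(1 + √(1 + 4q/(a p²)))` with `p = 1 − q`. -/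
noncomputable def rv (b : ℕ) (ω : ℝ) : ℝ :=
  ((1 - qv ω) * av b ω / 2) *
    (1 + Real.sqrt (1 + 4 * qv ω / (av b ω * (1 - qv ω) ^ 2)))

/-- `E[a^{N_h}]` for the path chain with parameters determined by `ω` and `b`. -/
noncomputable def ENv (b : ℕ) (ω : ℝ) (h : ℕ) : ℝ :=
  chainGenFun (1 - qv ω) (qv ω) (av b ω) h

/-- `ω(b) = (1+δ) ln b / b`. -/
noncomputable def omb (δ : ℝ) (b : ℕ) : ℝ := (1 + δ) * Real.log b / b

/-! Splitting off the first step, the weight of paths started in state `0` satisfies the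
Fibonacci-type recursion `f (h + 2) = p a f (h + 1) + q a f h`, so it is dominated by `C r ^ h`
for the positive root `r` of `r ^ 2 = p a r + q a`, which is the stated `r`. Substituting `q` and
`a` gives `r = (1.01 ω / 2λ) (1 + √(1 + 4λ / 1.01)) ≤ 1.02 ω / √λ` once `λ ≥ 101 ^ 2`. For
`ω = (1 + δ) log b / b`, the bound `log (1 + ω) ≥ ω - ω ^ 2` gives
`λ ≥ (1 + δ) log b · b ^ δ · exp (-(1 + δ) ^ 2 (log b) ^ 2 / b)`, which tends to infinity. -/

open Filter Topology

section PathSum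

variable {α R : Type*} [Fintype α] [DecidableEq α] [CommSemiring R]

def pathSum (w : α → α → R) (s : α) (h : ℕ) : R :=
  ∑ g : Fin (h + 1) → α, if g 0 = s then ∏ i : Fin h, w (g i.castSucc) (g i.succ) else 0

theorem pathSum_zero (w : α → α → R) (s : α) : pathSum w s 0 = 1 := by
  rw [pathSum, ← (Equiv.funUnique (Fin 1) α).symm.sum_comp]
  simp

theorem pathSum_succ (w : α → α → R) (s : α) (h : ℕ) :
    pathSum w s (h + 1) = ∑ t, w s t * pathSum w t h := by
  have first_step : pathSum w s (h + 1) =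
      ∑ g : Fin (h + 1) → α, w s (g 0) * ∏ i : Fin h, w (g i.castSucc) (g i.succ) := by
    rw [pathSum, ← (Fin.consEquiv fun _ => α).sum_comp]
    simp [Fintype.sum_prod_type, Fin.prod_univ_succ]
  rw [first_step]
  simp only [pathSum, Finset.mul_sum, mul_ite, mul_zero]
  rw [Finset.sum_comm]
  simp

end PathSum

def chainWeight (p q a : ℝ) (s t : Bool) : ℝ :=
  chainStep p q s t * if t = false then a else 1

theorem chainGenFun_eq_pathSum (p q a : ℝ) (h : ℕ) :
    chainGenFun p q a h = pathSum (chainWeight p q a) false h := by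
  refine Finset.sum_congr rfl fun g _ => ?_
  rw [trajProb, ← Finset.prod_const, Finset.prod_filter]
  simp only [chainWeight, Finset.prod_mul_distrib, ite_mul, one_mul, zero_mul]

theorem pathSum_chainWeight_false_succ (p q a : ℝ) (h : ℕ) :
    pathSum (chainWeight p q a) false (h + 1) =
      p * a * pathSum (chainWeight p q a) false h + q * pathSum (chainWeight p q a) true h := by
  rw [pathSum_succ, Fintype.sum_bool]
  simp [chainWeight, chainStep, add_comm]

theorem pathSum_chainWeight_true_succ (p q a : ℝ) (h : ℕ) :
    pathSum (chainWeight p q a) true (h + 1) = a * pathSum (chainWeight p q a) false h := by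
  rw [pathSum_succ, Fintype.sum_bool]
  simp [chainWeight, chainStep]

theorem chainGenFun_zero (p q a : ℝ) : chainGenFun p q a 0 = 1 := by
  rw [chainGenFun_eq_pathSum, pathSum_zero]

theorem chainGenFun_one (p q a : ℝ) : chainGenFun p q a 1 = p * a + q := by
  rw [chainGenFun_eq_pathSum, pathSum_chainWeight_false_succ, pathSum_zero, pathSum_zero, mul_one,
    mul_one]

theorem chainGenFun_add_two (p q a : ℝ) (h : ℕ) :
    chainGenFun p q a (h + 2) = p * a * chainGenFun p q a (h + 1) + q * a * chainGenFun p q a h := by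
  simp only [chainGenFun_eq_pathSum, pathSum_chainWeight_false_succ (h := h + 1),
    pathSum_chainWeight_true_succ]
  ring

theorem le_mul_pow_of_le_linear_recurrence {u : ℕ → ℝ} {α β r C : ℝ} (hα : 0 ≤ α) (hβ : 0 ≤ β)
    (hr : r ^ 2 = α * r + β) (h0 : u 0 ≤ C) (h1 : u 1 ≤ C * r)
    (hu : ∀ n, u (n + 2) ≤ α * u (n + 1) + β * u n) (n : ℕ) : u n ≤ C * r ^ n := by
  induction n using Nat.twoStepInduction with
  | zero => simpa using h0
  | one => simpa using h1
  | more n ih ih' =>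
    calc u (n + 2) ≤ α * u (n + 1) + β * u n := hu n
      _ ≤ α * (C * r ^ (n + 1)) + β * (C * r ^ n) := by gcongr
      _ = C * r ^ n * (α * r + β) := by ring
      _ = C * r ^ (n + 2) := by rw [← hr]; ring

noncomputable def chainRoot (p q a : ℝ) : ℝ :=
  p * a / 2 * (1 + Real.sqrt (1 + 4 * q / (a * p ^ 2)))

theorem chainRoot_sq {p q a : ℝ} (hp : 0 < p) (hq : 0 ≤ q) (ha : 0 < a) :
    chainRoot p q a ^ 2 = p * a * chainRoot p q a + q * a := by
  have hsq := Real.sq_sqrt (show 0 ≤ 1 + 4 * q / (a * p ^ 2) by positivity)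
  have hD : (1 + 4 * q / (a * p ^ 2)) * (a * p) ^ 2 = (a * p) ^ 2 + 4 * q * a := by
    field_simp
  unfold chainRoot
  linear_combination ((p * a) ^ 2 / 4) * hsq + hD / 4

theorem mul_le_chainRoot {p q a : ℝ} (hp : 0 ≤ p) (hq : 0 ≤ q) (ha : 0 ≤ a) :
    p * a ≤ chainRoot p q a := by
  have : 1 ≤ Real.sqrt (1 + 4 * q / (a * p ^ 2)) :=
    Real.one_le_sqrt.mpr (le_add_of_nonneg_right (by positivity))
  unfold chainRoot
  nlinarith [mul_nonneg hp ha]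

theorem chainGenFun_le_mul_chainRoot_pow {p q a : ℝ} (hp : 0 < p) (hq : 0 ≤ q) (ha : 0 < a) :
    ∃ C : ℝ, 0 < C ∧ ∀ h : ℕ, chainGenFun p q a h ≤ C * chainRoot p q a ^ h := by
  have hr := mul_le_chainRoot hp.le hq ha.le
  refine ⟨1 + q / (p * a), by positivity, le_mul_pow_of_le_linear_recurrence (by positivity)
    (by positivity) (chainRoot_sq hp hq ha) ?_ ?_ fun n => (chainGenFun_add_two p q a n).le⟩
  · rw [chainGenFun_zero]
    exact le_add_of_nonneg_right (by positivity)
  · calc chainGenFun p q a 1 = (1 + q / (p * a)) * (p * a) := by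
          rw [chainGenFun_one]; field_simp
      _ ≤ (1 + q / (p * a)) * chainRoot p q a := by gcongr

theorem one_sub_qv {ω : ℝ} (hω : 0 < ω) : 1 - qv ω = (1 + ω)⁻¹ := by
  rw [qv]
  field_simp
  ring

theorem ENv_le_mul_rv_pow (b : ℕ) {ω : ℝ} (hω : 0 < ω) :
    ∃ C : ℝ, 0 < C ∧ ∀ h : ℕ, ENv b ω h ≤ C * rv b ω ^ h := by
  have hp : 0 < 1 - qv ω := by rw [one_sub_qv hω]; positivity
  exact chainGenFun_le_mul_chainRoot_pow hp (by unfold qv; positivity)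
    (by unfold av lamv; positivity)

theorem rv_eq {b : ℕ} {ω : ℝ} (hω : 0 < ω) :
    rv b ω = 1.01 * ω / (2 * lamv b ω) * (1 + Real.sqrt (1 + 4 * lamv b ω / 1.01)) := by
  have hlam : 0 < lamv b ω := by unfold lamv; positivity
  have hpa : (1 - qv ω) * av b ω = 1.01 * ω / lamv b ω := by
    rw [one_sub_qv hω, av]
    field_simp
  have hq : 4 * qv ω / (av b ω * (1 - qv ω) ^ 2) = 4 * lamv b ω / 1.01 := by
    rw [one_sub_qv hω, av, qv]
    field_simp
  rw [rv, hpa, hq]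
  ring

theorem mul_div_mul_one_add_sqrt_le {ω L : ℝ} (hω : 0 ≤ ω) (hL : 101 ^ 2 ≤ L) :
    1.01 * ω / (2 * L) * (1 + Real.sqrt (1 + 4 * L / 1.01)) ≤ 1.02 * ω / Real.sqrt L := by
  set s := Real.sqrt L
  have hs : 101 ≤ s := Real.le_sqrt_of_sq_le hL
  have hsL : s ^ 2 = L := Real.sq_sqrt (by linarith)
  have hroot : Real.sqrt (1 + 4 * L / 1.01) ≤ 1 + 2 * s := by
    have : 4 * L / 1.01 ≤ 4 * L := div_le_self (by positivity) (by norm_num)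
    rw [Real.sqrt_le_left (by positivity)]
    nlinarith
  calc 1.01 * ω / (2 * L) * (1 + Real.sqrt (1 + 4 * L / 1.01))
      ≤ 1.01 * ω / (2 * L) * (2 + 2 * s) :=
        mul_le_mul_of_nonneg_left (by linarith) (by positivity)
    _ = 1.01 * (1 + 1 / s) * ω / s := by rw [← hsL]; field_simp; ring
    _ ≤ 1.02 * ω / s := by
      gcongr
      have : 1 / s ≤ 1 / 101 := one_div_le_one_div_of_le (by norm_num) hs
      linarith

theorem rv_le {b : ℕ} {ω : ℝ} (hω : 0 < ω) (hlam : 101 ^ 2 ≤ lamv b ω) :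
    rv b ω ≤ 1.02 * ω / Real.sqrt (lamv b ω) :=
  rv_eq hω ▸ mul_div_mul_one_add_sqrt_le hω.le hlam

theorem rv_nonneg (b : ℕ) {ω : ℝ} (hω : 0 < ω) : 0 ≤ rv b ω := by
  rw [rv_eq hω]
  unfold lamv
  positivity

theorem exp_mul_sub_sq_le_one_add_pow {x : ℝ} (hx : 0 ≤ x) (n : ℕ) :
    Real.exp (n * (x - x ^ 2)) ≤ (1 + x) ^ n := by
  have hx1 : 0 < 1 + x := by linarith
  have hlog : x - x ^ 2 ≤ Real.log (1 + x) := calc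
    x - x ^ 2 ≤ 1 - (1 + x)⁻¹ := by
      rw [← sub_nonneg]
      field_simp
      ring_nf
      positivity
    _ ≤ Real.log (1 + x) := Real.one_sub_inv_le_log_of_pos hx1
  calc Real.exp (n * (x - x ^ 2)) ≤ Real.exp (n * Real.log (1 + x)) := by gcongr
    _ = (1 + x) ^ n := by rw [Real.exp_nat_mul, Real.exp_log hx1]

theorem omb_nonneg {δ : ℝ} (hδ : 0 < δ) (b : ℕ) : 0 ≤ omb δ b := by
  unfold omb
  have := Real.log_natCast_nonneg b
  positivity

theorem omb_pos {δ : ℝ} (hδ : 0 < δ) {b : ℕ} (hb : 1 < b) : 0 < omb δ b := by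
  have : 0 < Real.log b := Real.log_pos (by exact_mod_cast hb)
  unfold omb
  positivity

theorem le_lamv_omb {δ : ℝ} (hδ : 0 < δ) {b : ℕ} (hb : 0 < b) :
    (1 + δ) * Real.log b * Real.exp (δ * Real.log b) *
        Real.exp (-((1 + δ) ^ 2 * (Real.log b ^ 2 / b))) ≤ lamv b (omb δ b) := by
  have hb' : (0 : ℝ) < b := by exact_mod_cast hb
  have hexp : Real.exp (b * (omb δ b - omb δ b ^ 2)) =
      b * Real.exp (δ * Real.log b) * Real.exp (-((1 + δ) ^ 2 * (Real.log b ^ 2 / b))) := by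
    rw [← Real.exp_log hb', ← Real.exp_add, ← Real.exp_add, Real.exp_log hb', omb]
    congr 1
    field_simp
    ring
  calc (1 + δ) * Real.log b * Real.exp (δ * Real.log b) *
        Real.exp (-((1 + δ) ^ 2 * (Real.log b ^ 2 / b)))
      = omb δ b * Real.exp (b * (omb δ b - omb δ b ^ 2)) := by
        rw [hexp, omb]
        field_simp
    _ ≤ lamv b (omb δ b) := by
        unfold lamv
        gcongr
        · exact omb_nonneg hδ b
        · exact exp_mul_sub_sq_le_one_add_pow (omb_nonneg hδ b) b

theorem tendsto_lamv_omb {δ : ℝ} (hδ : 0 < δ) :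
    Tendsto (fun b : ℕ => lamv b (omb δ b)) atTop atTop := by
  have hlog := Real.tendsto_log_atTop
  have hsmall : Tendsto (fun x : ℝ => Real.exp (-((1 + δ) ^ 2 * (Real.log x ^ 2 / x))))
      atTop (𝓝 1) := by
    have := (Real.tendsto_pow_log_div_mul_add_atTop 1 0 2 one_ne_zero).const_mul ((1 + δ) ^ 2)
    simpa using this.neg.rexp
  have hbound : Tendsto (fun x : ℝ => (1 + δ) * Real.log x * Real.exp (δ * Real.log x) *
      Real.exp (-((1 + δ) ^ 2 * (Real.log x ^ 2 / x)))) atTop atTop :=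
    ((hlog.const_mul_atTop (by positivity)).atTop_mul_atTop₀
      (Real.tendsto_exp_atTop.comp (hlog.const_mul_atTop hδ))).atTop_mul_pos one_pos hsmall
  refine tendsto_atTop_mono' _ ?_ (hbound.comp tendsto_natCast_atTop_atTop)
  filter_upwards [eventually_gt_atTop 0] with b hb
  exact le_lamv_omb hδ hb

/-- `E[a^{N_h}] ≤ C·r^h` with `r = (pa/2)(1+√(1+4q/(ap²)))`; moreover for
`ω = (1+δ)ln b/b` and `b` sufficiently large, `r ≤ 1.02·ω/√λ` and hence
`E[a^{N_h}] = O((1.02·ω/√λ)^h)`. -/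
theorem stmt14 (δ : ℝ) (hδ : 0 < δ) :
    (∀ b : ℕ, 1 ≤ b → ∀ ω : ℝ, 0 < ω →
      ∃ C : ℝ, 0 < C ∧ ∀ h : ℕ, ENv b ω h ≤ C * rv b ω ^ h) ∧
    (∃ b₀ : ℕ, ∀ b : ℕ, b₀ ≤ b →
      rv b (omb δ b) ≤ 1.02 * omb δ b / Real.sqrt (lamv b (omb δ b)) ∧
      ∃ C : ℝ, 0 < C ∧ ∀ h : ℕ,
        ENv b (omb δ b) h ≤
          C * (1.02 * omb δ b / Real.sqrt (lamv b (omb δ b))) ^ h) := by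
  refine ⟨fun b _ ω hω => ENv_le_mul_rv_pow b hω, ?_⟩
  obtain ⟨b₀, hb₀⟩ := eventually_atTop.mp
    ((eventually_gt_atTop 1).and ((tendsto_lamv_omb hδ).eventually_ge_atTop (101 ^ 2)))
  refine ⟨b₀, fun b hb => ?_⟩
  obtain ⟨hb1, hlam⟩ := hb₀ b hb
  have hω := omb_pos hδ hb1
  have hr := rv_le hω hlam
  obtain ⟨C, hC, hENv⟩ := ENv_le_mul_rv_pow b hω
  refine ⟨hr, C, hC, fun h => (hENv h).trans ?_⟩
  exact mul_le_mul_of_nonneg_left (pow_le_pow_left₀ (rv_nonneg b hω) hr h) hC.le
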